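/- Let n ≥ 2 and m ≥ 2, let S₁,…,Sₙ be a Cuntz family of order n on a complex Hilbert space H, let z and y be unit vectors in V_{n,m} that are not conjugate (z ≁ y), and let Ω_z, Ω_y ∈ H be unit vectors with s(z)Ω_z = Ω_z and s(y)Ω_y = Ω_y. Then ⟨Ω_z, S_J Ω_y⟩ = 0 for every word J with 1 ≤ |J| ≤ m−1. -/

import Mathlib

noncomputable section

/-- `Vnm n m` is the Hilbert space `ℓ²({1,…,n}^m)`, identified with `(ℂ^n)^{⊗m}`. -/
abbrev Vnm (n m : ℕ) : Type := EuclideanSpace ℂ (Fin m → Fin n)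

/-- The tensor product `x ⊗ y`, via `(x ⊗ y)_{JK} = x_J y_K`. -/
def tensV {n m l : ℕ} (x : Vnm n m) (y : Vnm n l) : Vnm n (m + l) :=
  WithLp.toLp 2 fun J => x (fun i => J (Fin.castAdd l i)) * y (fun i => J (Fin.natAdd m i))

/-- Re-indexing of a tensor along an equality of lengths. -/
def castV {n m m' : ℕ} (h : m = m') (z : Vnm n m) : Vnm n m' :=
  WithLp.toLp 2 fun J => z (fun i => J (Fin.cast h i))

/-- The tensor power `x^{⊗p}`. -/
def tpowV {n m : ℕ} (x : Vnm n m) (p : ℕ) : Vnm n (p * m) :=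
  WithLp.toLp 2 fun J => ∏ i : Fin p, x (fun t => J ⟨(i : ℕ) * m + (t : ℕ), by
    have h2 : (t : ℕ) < m := t.isLt
    have h1 : (i : ℕ) + 1 ≤ p := i.isLt
    have h3 : ((i : ℕ) + 1) * m = (i : ℕ) * m + m := by ring
    have h4 : ((i : ℕ) + 1) * m ≤ p * m := Nat.mul_le_mul_right m h1
    omega⟩)

/-- The coordinatewise complex conjugate. -/
def conjV {n m : ℕ} (z : Vnm n m) : Vnm n m := WithLp.toLp 2 fun J => starRingEnd ℂ (z J)

/-- A unit vector `z` is periodic if `z = x^{⊗p}` for some unit vector `x` and `p ≥ 2`;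
it is nonperiodic if it is not periodic. -/
def PeriodicV {n m : ℕ} (z : Vnm n m) : Prop :=
  ∃ (m' p : ℕ) (x : Vnm n m') (h : p * m' = m),
    ‖x‖ = 1 ∧ 2 ≤ p ∧ castV h (tpowV x p) = z

/-- The matricization of `z ∈ V_{n,b+a}` as an operator `V_{n,a} → V_{n,b}`,
`(T z) e_K = Σ_{|J|=b} z_{JK} e_J`. -/
def matT {n b a : ℕ} (z : Vnm n (b + a)) :
    EuclideanSpace ℂ (Fin a → Fin n) →L[ℂ] EuclideanSpace ℂ (Fin b → Fin n) :=
  LinearMap.toContinuousLinearMap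
    (Matrix.toEuclideanLin
      (Matrix.of fun (J : Fin b → Fin n) (K : Fin a → Fin n) => z (Fin.append J K)))

/-- The matricization `T_a(z) : V_{n,a} → V_{n,m-a}` of `z ∈ V_{n,m}`,
`T_a(z) e_K = Σ_{|J|=m−a} z_{JK} e_J`. -/
def Tmat {n m : ℕ} (a : ℕ) (h : a ≤ m) (z : Vnm n m) :
    EuclideanSpace ℂ (Fin a → Fin n) →L[ℂ] EuclideanSpace ℂ (Fin (m - a) → Fin n) :=
  matT (castV (by omega : m = (m - a) + a) z)

/-- `z` is indecomposable if it is not a tensor product of lower-degree tensors. -/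
def IndecomposableV {n m : ℕ} (z : Vnm n m) : Prop :=
  1 ≤ m ∧ ¬ ∃ (a b : ℕ) (h : a + b = m) (x : Vnm n a) (y : Vnm n b),
    1 ≤ a ∧ 1 ≤ b ∧ castV h (tensV x y) = z

/-- The iterated tensor product `x₁ ⊗ ⋯ ⊗ x_l` of homogeneous tensors of degrees `ms i`. -/
def bigTensV {n l : ℕ} (ms : Fin l → ℕ) (xs : ∀ i, Vnm n (ms i)) : Vnm n (∑ i, ms i) :=
  WithLp.toLp 2 fun J => ∏ i : Fin l, xs i (fun t => J ⟨(∑ j ∈ Finset.Iio i, ms j) + (t : ℕ), by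
    have h1 : (∑ j ∈ Finset.Iio i, ms j) + ms i ≤ ∑ j, ms j := by
      calc (∑ j ∈ Finset.Iio i, ms j) + ms i
          = ∑ j ∈ insert i (Finset.Iio i), ms j := by
            rw [Finset.sum_insert (by simp)]; ring
        _ ≤ ∑ j, ms j := Finset.sum_le_sum_of_subset (Finset.subset_univ _)
    have h2 : (t : ℕ) < ms i := t.isLt
    omega⟩)

/-- `z ⊠ y ∈ V_{nn',m}`: `(z ⊠ y)_L = z_J y_K` where `L = J ⊠ K` is given by the
pairing `l_t = n'·j_t + k_t` of `{0,…,n−1}×{0,…,n'−1}` with `{0,…,nn'−1}`. -/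
def boxTensV {n n' m : ℕ} (z : Vnm n m) (y : Vnm n' m) : Vnm (n * n') m :=
  WithLp.toLp 2 fun L =>
    z (fun t => ⟨(L t : ℕ) / n', by
        have h := (L t).isLt
        have hn' : 0 < n' := Nat.pos_of_ne_zero (by rintro rfl; simp at h)
        exact (Nat.div_lt_iff_lt_mul hn').mpr h⟩) *
    y (fun t => ⟨(L t : ℕ) % n', by
        have h := (L t).isLt
        have hn' : 0 < n' := Nat.pos_of_ne_zero (by rintro rfl; simp at h)
        exact Nat.mod_lt _ hn'⟩)

/-- `z * y := z^{⊗α} ⊠ y^{⊗β} ∈ V_{nn',d}` where `d = αm = βl` is the lcm of `m` and `l`. -/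
def starV {n n' m l : ℕ} (z : Vnm n m) (y : Vnm n' l) : Vnm (n * n') (Nat.lcm m l) :=
  boxTensV (castV (Nat.div_mul_cancel (Nat.dvd_lcm_left m l)) (tpowV z (Nat.lcm m l / m)))
    (castV (Nat.div_mul_cancel (Nat.dvd_lcm_right m l)) (tpowV y (Nat.lcm m l / l)))

/-- Conjugacy of homogeneous tensors: `z = y`, or `z = x₁ ⊗ x₂` and `y = x₂ ⊗ x₁`
for some unit vectors `x₁, x₂`. -/
def ConjVec {n m l : ℕ} (z : Vnm n m) (y : Vnm n l) : Prop :=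
  (∃ h : m = l, castV h z = y) ∨
    ∃ (a b : ℕ) (x₁ : Vnm n a) (x₂ : Vnm n b) (h₁ : a + b = m) (h₂ : b + a = l),
      ‖x₁‖ = 1 ∧ ‖x₂‖ = 1 ∧ castV h₁ (tensV x₁ x₂) = z ∧ castV h₂ (tensV x₂ x₁) = y

/-- A Cuntz family of order `n` on `H`: `Sᵢ* Sⱼ = δᵢⱼ 1` and `Σᵢ Sᵢ Sᵢ* = 1`. -/
def IsCuntzFamily {H : Type*} [NormedAddCommGroup H] [InnerProductSpace ℂ H]
    [CompleteSpace H] {n : ℕ} (S : Fin n → H →L[ℂ] H) : Prop :=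
  (∀ i j, (ContinuousLinearMap.adjoint (S i)).comp (S j) = if i = j then 1 else 0) ∧
    ∑ i, (S i).comp (ContinuousLinearMap.adjoint (S i)) = 1

/-- `S_J := S_{j₁} ∘ ⋯ ∘ S_{j_k}` for a word `J = (j₁,…,j_k)`, with `S_∅ = 1`. -/
def Sword {H : Type*} [NormedAddCommGroup H] [InnerProductSpace ℂ H]
    {ι : Type*} (S : ι → H →L[ℂ] H) : (k : ℕ) → (Fin k → ι) → (H →L[ℂ] H)
  | 0, _ => 1
  | (k + 1), J => (S (J 0)).comp (Sword S k (fun i => J i.succ))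

/-- `s(z) := Σ_{|J|=m} z_J S_J`. -/
def sop {H : Type*} [NormedAddCommGroup H] [InnerProductSpace ℂ H]
    {n m : ℕ} (S : Fin n → H →L[ℂ] H) (z : Vnm n m) : H →L[ℂ] H :=
  ∑ J : Fin m → Fin n, z J • Sword S m J

/-!
Fix `k ≤ m`, put `a = m - k` and `c_J = ⟪Ω_z, S_J Ω_y⟫` for `|J| = k`. Expanding
`Ω_z = s(z) Ω_z` and `Ω_y = s(y) Ω_y` and using `S_A^* S_B = δ_{AB}` for words of equal length
gives `c = Z̄ Y c`, where `Z_{JK} = z_{JK}` and `Y_{KL} = y_{KL}` are matricizations of unit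
vectors. Row by row Cauchy–Schwarz makes a matrix of Hilbert–Schmidt norm `1` a contraction, so if
`c ≠ 0` every one of these inequalities is an equality: the rows of `Y` are parallel to `c̄` and
those of `Z` to `Y c`. Unwinding, `z = c̄ ⊗ q` and `y = q ⊗ c̄` for some `q`, and after
normalisation this says `z ∼ y`.
-/

open ContinuousLinearMap

section Words

variable {ι : Type*}

def joinW {m k l : ℕ} (h : m = k + l) (J : Fin k → ι) (K : Fin l → ι) : Fin m → ι :=
  Fin.append J K ∘ Fin.cast h

def joinWEquiv {m k l : ℕ} (h : m = k + l) : (Fin k → ι) × (Fin l → ι) ≃ (Fin m → ι) :=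
  (Fin.appendEquiv k l).trans (Equiv.arrowCongr (finCongr h.symm) (Equiv.refl ι))

lemma sum_joinW [Fintype ι] {β : Type*} [AddCommMonoid β] {m k l : ℕ} (h : m = k + l)
    (f : (Fin m → ι) → β) : ∑ B, f B = ∑ J, ∑ K, f (joinW h J K) := by
  rw [← (joinWEquiv h).sum_comp, Fintype.sum_prod_type]
  rfl

lemma joinW_rfl {k l : ℕ} (J : Fin k → ι) (K : Fin l → ι) : joinW rfl J K = Fin.append J K := by
  funext i
  simp [joinW]

end Words

lemma Vnm.ext_joinW {n m k l : ℕ} (h : m = k + l) {f g : Vnm n m}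
    (hfg : ∀ J K, f (joinW h J K) = g (joinW h J K)) : f = g := by
  ext B
  obtain ⟨⟨J, K⟩, rfl⟩ := (joinWEquiv h).surjective B
  exact hfg J K

@[simp]
lemma castV_tensV_joinW {n k l m : ℕ} (h : m = k + l) (x₁ : Vnm n k) (x₂ : Vnm n l)
    (J : Fin k → Fin n) (K : Fin l → Fin n) :
    castV h.symm (tensV x₁ x₂) (joinW h J K) = x₁ J * x₂ K := by
  simp [castV, tensV, joinW]

lemma norm_sq_eq_sum_joinW {n m k l : ℕ} (h : m = k + l) (z : Vnm n m) :
    ‖z‖ ^ 2 = ∑ J, ∑ K, ‖z (joinW h J K)‖ ^ 2 := by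
  rw [EuclideanSpace.norm_sq_eq, sum_joinW h]

section Sword

variable {H : Type*} [NormedAddCommGroup H] [InnerProductSpace ℂ H] {ι : Type*}

lemma Sword_eq_prod (S : ι → H →L[ℂ] H) : ∀ (k : ℕ) (J : Fin k → ι),
    Sword S k J = ((List.ofFn J).map S).prod
  | 0, J => by simp [Sword]
  | (k + 1), J => by
      rw [Sword, List.ofFn_succ, List.map_cons, List.prod_cons, Sword_eq_prod S k]
      rfl

lemma Sword_joinW (S : ι → H →L[ℂ] H) {m k l : ℕ} (h : m = k + l)
    (J : Fin k → ι) (K : Fin l → ι) :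
    Sword S m (joinW h J K) = Sword S k J ∘L Sword S l K := by
  subst h
  rw [joinW_rfl, Sword_eq_prod, Sword_eq_prod, Sword_eq_prod, List.ofFn_fin_append,
    List.map_append, List.prod_append]
  rfl

lemma Sword_joinW_apply (S : ι → H →L[ℂ] H) {m k l : ℕ} (h : m = k + l)
    (J : Fin k → ι) (K : Fin l → ι) (v : H) :
    Sword S m (joinW h J K) v = Sword S k J (Sword S l K v) := by
  rw [Sword_joinW]
  rfl

lemma sop_apply_eq_sum_joinW {n m a k : ℕ} (S : Fin n → H →L[ℂ] H) (h : m = a + k)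
    (y : Vnm n m) (v : H) :
    sop S y v = ∑ K, ∑ L, y (joinW h K L) • Sword S a K (Sword S k L v) := by
  simp [sop, sum_apply, sum_joinW h, Sword_joinW_apply S h]

variable [CompleteSpace H] {S : ι → H →L[ℂ] H}

lemma adjoint_Sword_comp_Sword [DecidableEq ι]
    (hS : ∀ i j, adjoint (S i) ∘L S j = if i = j then 1 else 0) :
    ∀ (k : ℕ) (A B : Fin k → ι), adjoint (Sword S k A) ∘L Sword S k B = if A = B then 1 else 0
  | 0, A, B => by
      simp [Sword, Subsingleton.elim A B, one_def, adjoint_id]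
  | (k + 1), A, B => by
      rw [Sword, Sword, adjoint_comp, comp_assoc, ← comp_assoc (adjoint (S (A 0))), hS]
      by_cases h0 : A 0 = B 0
      · have htail : (fun i : Fin k => A i.succ) = (fun i => B i.succ) ↔ A = B := by
          simp only [funext_iff, Fin.forall_fin_succ, h0, true_and]
        rw [if_pos h0, one_def, id_comp, adjoint_Sword_comp_Sword hS k]
        exact if_congr htail rfl rfl
      · rw [if_neg h0, zero_comp, comp_zero, if_neg fun h => h0 (congrFun h 0)]

lemma inner_Sword_apply_Sword_apply [DecidableEq ι]
    (hS : ∀ i j, adjoint (S i) ∘L S j = if i = j then 1 else 0) {k : ℕ} (A B : Fin k → ι)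
    (x v : H) : inner ℂ (Sword S k A x) (Sword S k B v) = if A = B then inner ℂ x v else 0 := by
  rw [← adjoint_inner_right, ← comp_apply, adjoint_Sword_comp_Sword hS]
  split_ifs <;> simp

end Sword

section Cuntz

variable {H : Type*} [NormedAddCommGroup H] [InnerProductSpace ℂ H] [CompleteSpace H] {n : ℕ}
  {S : Fin n → H →L[ℂ] H}

lemma inner_sop_apply_Sword_apply (hS : ∀ i j, adjoint (S i) ∘L S j = if i = j then 1 else 0)
    {m : ℕ} (z : Vnm n m) (B : Fin m → Fin n) (x v : H) :
    inner ℂ (sop S z x) (Sword S m B v) = starRingEnd ℂ (z B) * inner ℂ x v := by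
  simp [sop, sum_apply, inner_Sword_apply_Sword_apply hS, mul_comm]

lemma inner_Sword_eq_of_sop_apply_eq_self
    (hS : ∀ i j, adjoint (S i) ∘L S j = if i = j then 1 else 0) {m k a : ℕ} {z y : Vnm n m}
    {Ωz Ωy : H} (hfixz : sop S z Ωz = Ωz) (hfixy : sop S y Ωy = Ωy)
    (hma : m = k + a) (ham : m = a + k) (J : Fin k → Fin n) :
    inner ℂ Ωz (Sword S k J Ωy) = ∑ K, starRingEnd ℂ (z (joinW hma J K)) *
      ∑ L, y (joinW ham K L) * inner ℂ Ωz (Sword S k L Ωy) := by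
  calc inner ℂ Ωz (Sword S k J Ωy) = inner ℂ (sop S z Ωz) (Sword S k J (sop S y Ωy)) := by
        rw [hfixz, hfixy]
    _ = ∑ K, ∑ L, y (joinW ham K L) *
          inner ℂ (sop S z Ωz) (Sword S m (joinW hma J K) (Sword S k L Ωy)) := by
        rw [sop_apply_eq_sum_joinW S ham y]
        simp only [map_sum, map_smul, inner_sum, inner_smul_right, ← Sword_joinW_apply S hma]
    _ = _ := by
        simp only [inner_sop_apply_Sword_apply hS, Finset.mul_sum]
        exact Finset.sum_congr rfl fun K _ => Finset.sum_congr rfl fun L _ => by ring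

end Cuntz

section CauchySchwarz

variable {𝕜 E : Type*} [RCLike 𝕜] [NormedAddCommGroup E] [InnerProductSpace 𝕜 E]
  {ι κ : Type*} [Fintype ι] [Fintype κ]

lemma sum_norm_inner_sq_le (r : ι → E) (v : E) :
    ∑ i, ‖inner 𝕜 (r i) v‖ ^ 2 ≤ (∑ i, ‖r i‖ ^ 2) * ‖v‖ ^ 2 := by
  rw [Finset.sum_mul]
  gcongr with i
  rw [← mul_pow]
  gcongr
  exact norm_inner_le_norm _ _

lemma exists_eq_smul_of_sum_norm_inner_sq_eq {r : ι → E} {v : E} (hv : v ≠ 0)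
    (h : (∑ i, ‖r i‖ ^ 2) * ‖v‖ ^ 2 ≤ ∑ i, ‖inner 𝕜 (r i) v‖ ^ 2) (i : ι) :
    ∃ t : 𝕜, r i = t • v := by
  have hle : ∀ j ∈ Finset.univ, ‖inner 𝕜 (r j) v‖ ^ 2 ≤ ‖r j‖ ^ 2 * ‖v‖ ^ 2 := fun j _ => by
    rw [← mul_pow]
    gcongr
    exact norm_inner_le_norm _ _
  have hsum : ∑ j, ‖inner 𝕜 (r j) v‖ ^ 2 = ∑ j, ‖r j‖ ^ 2 * ‖v‖ ^ 2 := by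
    rw [← Finset.sum_mul]
    exact le_antisymm (sum_norm_inner_sq_le r v) h
  have hi : ‖inner 𝕜 v (r i)‖ = ‖v‖ * ‖r i‖ := by
    rw [norm_inner_symm, mul_comm, ← sq_eq_sq₀ (norm_nonneg _) (by positivity), mul_pow]
    exact (Finset.sum_eq_sum_iff_of_le hle).1 hsum i (Finset.mem_univ i)
  exact (((norm_inner_eq_norm_tfae 𝕜 v (r i)).out 0 2 :).1 hi).resolve_left hv

theorem norm_eq_and_eq_smul_of_inner_rows {rY : κ → EuclideanSpace 𝕜 ι}
    {rZ : ι → EuclideanSpace 𝕜 κ} (hY : ∑ K, ‖rY K‖ ^ 2 ≤ 1) (hZ : ∑ J, ‖rZ J‖ ^ 2 ≤ 1)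
    {c : EuclideanSpace 𝕜 ι} {w : EuclideanSpace 𝕜 κ} (hc : c ≠ 0)
    (hw : ∀ K, w K = inner 𝕜 (rY K) c) (hcw : ∀ J, c J = inner 𝕜 (rZ J) w) :
    ‖w‖ = ‖c‖ ∧ (∀ K, ∃ t : 𝕜, rY K = t • c) ∧ ∀ J, ∃ s : 𝕜, rZ J = s • w := by
  have hw2 : ‖w‖ ^ 2 = ∑ K, ‖inner 𝕜 (rY K) c‖ ^ 2 := by simp [EuclideanSpace.norm_sq_eq, hw]
  have hc2 : ‖c‖ ^ 2 = ∑ J, ‖inner 𝕜 (rZ J) w‖ ^ 2 := by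
    simp only [EuclideanSpace.norm_sq_eq, hcw]
  have hwle := sum_norm_inner_sq_le (𝕜 := 𝕜) rY c
  have hcle := sum_norm_inner_sq_le (𝕜 := 𝕜) rZ w
  have hY' := mul_le_of_le_one_left (sq_nonneg ‖c‖) hY
  have hZ' := mul_le_of_le_one_left (sq_nonneg ‖w‖) hZ
  have hwc : ‖w‖ = ‖c‖ := (sq_eq_sq₀ (norm_nonneg _) (norm_nonneg _)).1 (by linarith)
  have hw0 : w ≠ 0 := by rw [← norm_ne_zero_iff, hwc, norm_ne_zero_iff]; exact hc
  exact ⟨hwc, exists_eq_smul_of_sum_norm_inner_sq_eq hc (by linarith),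
    exists_eq_smul_of_sum_norm_inner_sq_eq hw0 (by linarith)⟩

end CauchySchwarz

section Tensors

variable {n m k a : ℕ}

theorem conjVec_of_joinW_eq_mul (hma : m = k + a) (ham : m = a + k) {z y : Vnm n m}
    (hz : ‖z‖ = 1) (p : Vnm n k) (q : Vnm n a) (hzpq : ∀ J K, z (joinW hma J K) = p J * q K)
    (hyqp : ∀ K L, y (joinW ham K L) = q K * p L) : ConjVec z y := by
  have hpq : ‖p‖ * ‖q‖ = 1 := by
    have hsq : (‖p‖ * ‖q‖) ^ 2 = ‖z‖ ^ 2 := by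
      rw [mul_pow, norm_sq_eq_sum_joinW hma, EuclideanSpace.norm_sq_eq, EuclideanSpace.norm_sq_eq,
        Finset.sum_mul_sum]
      simp [hzpq, mul_pow]
    rw [← hz]
    exact (sq_eq_sq₀ (by positivity) (norm_nonneg _)).1 hsq
  have hp : (‖p‖ : ℂ) ≠ 0 := by
    norm_cast
    rintro h
    simp [h] at hpq
  refine Or.inr ⟨k, a, (‖p‖⁻¹ : ℂ) • p, (‖p‖ : ℂ) • q, hma.symm, ham.symm, ?_, ?_, ?_, ?_⟩
  · rw [norm_smul, norm_inv, Complex.norm_real, norm_norm, inv_mul_cancel₀ (by exact_mod_cast hp)]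
  · rw [norm_smul, Complex.norm_real, norm_norm, hpq]
  · refine Vnm.ext_joinW hma fun J K => ?_
    rw [castV_tensV_joinW, hzpq]
    simp only [PiLp.smul_apply, smul_eq_mul]
    field_simp
  · refine Vnm.ext_joinW ham fun K L => ?_
    rw [castV_tensV_joinW, hyqp]
    simp only [PiLp.smul_apply, smul_eq_mul]
    field_simp

theorem exists_factor_of_eq_sum_joinW (hma : m = k + a) (ham : m = a + k) {z y : Vnm n m}
    (hz : ‖z‖ = 1) (hy : ‖y‖ = 1) {c : Vnm n k} (hc : c ≠ 0)
    (hfix : ∀ J, c J = ∑ K, starRingEnd ℂ (z (joinW hma J K)) * ∑ L, y (joinW ham K L) * c L) :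
    ∃ q : Vnm n a, (∀ J K, z (joinW hma J K) = conjV c J * q K) ∧
      ∀ K L, y (joinW ham K L) = q K * conjV c L := by
  set rY : (Fin a → Fin n) → Vnm n k := fun K => WithLp.toLp 2 fun L =>
    starRingEnd ℂ (y (joinW ham K L))
  set rZ : (Fin k → Fin n) → Vnm n a := fun J => WithLp.toLp 2 fun K => z (joinW hma J K)
  set w : Vnm n a := WithLp.toLp 2 fun K => ∑ L, y (joinW ham K L) * c L
  have hY : ∑ K, ‖rY K‖ ^ 2 ≤ 1 := by
    simp [rY, EuclideanSpace.norm_sq_eq, ← norm_sq_eq_sum_joinW ham, hy]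
  have hZ : ∑ J, ‖rZ J‖ ^ 2 ≤ 1 := by
    simp [rZ, EuclideanSpace.norm_sq_eq, ← norm_sq_eq_sum_joinW hma, hz]
  have hw : ∀ K, w K = inner ℂ (rY K) c := fun K => by
    simp [w, rY, PiLp.inner_apply, mul_comm]
  have hcw : ∀ J, c J = inner ℂ (rZ J) w := fun J => by
    simp [hfix J, rZ, w, PiLp.inner_apply, mul_comm]
  obtain ⟨hwc, hrY, hrZ⟩ := norm_eq_and_eq_smul_of_inner_rows hY hZ hc hw hcw
  choose t ht using hrY
  choose s hs using hrZ
  have hwK : ∀ K, w K = starRingEnd ℂ (t K) * (‖c‖ : ℂ) ^ 2 := fun K => by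
    rw [hw K, ht K, inner_smul_left, inner_self_eq_norm_sq_to_K]
    rfl
  have hcJ : ∀ J, starRingEnd ℂ (c J) = s J * (‖c‖ : ℂ) ^ 2 := fun J => by
    rw [hcw J, hs J, inner_smul_left, inner_self_eq_norm_sq_to_K, hwc]
    simp
  refine ⟨WithLp.toLp 2 fun K => starRingEnd ℂ (t K), fun J K => ?_, fun K L => ?_⟩
  · have hJK : z (joinW hma J K) = s J * w K := congrArg (· K) (hs J)
    rw [hJK, hwK]
    simp only [conjV, hcJ]
    ring
  · have hKL : starRingEnd ℂ (y (joinW ham K L)) = t K * c L := congrArg (· L) (ht K)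
    rw [← Complex.conj_conj (y _), hKL]
    simp [conjV]

end Tensors

theorem subCuntz_stmt14_general {H : Type*} [NormedAddCommGroup H] [InnerProductSpace ℂ H]
    [CompleteSpace H] {n m : ℕ}
    (S : Fin n → H →L[ℂ] H) (hS : IsCuntzFamily S)
    (z y : Vnm n m) (hz : ‖z‖ = 1) (hy : ‖y‖ = 1)
    (hnc : ¬ ConjVec z y)
    (Ωz Ωy : H)
    (hfixz : sop S z Ωz = Ωz) (hfixy : sop S y Ωy = Ωy) :
    ∀ (k : ℕ), 1 ≤ k → k ≤ m - 1 → ∀ J : Fin k → Fin n,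
      (inner ℂ Ωz (Sword S k J Ωy) : ℂ) = 0 := by
  intro k _ hkm J₀
  by_contra hJ₀
  obtain ⟨a, hma⟩ : ∃ a, m = k + a := ⟨m - k, by omega⟩
  have ham : m = a + k := by omega
  set c : Vnm n k := WithLp.toLp 2 fun J => inner ℂ Ωz (Sword S k J Ωy)
  have hc : c ≠ 0 := fun h => hJ₀ (congrArg (· J₀) h)
  obtain ⟨q, hzq, hyq⟩ := exists_factor_of_eq_sum_joinW hma ham hz hy hc
    (inner_Sword_eq_of_sop_apply_eq_self hS.1 hfixz hfixy hma ham)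
  exact hnc (conjVec_of_joinW_eq_mul hma ham hz _ q hzq hyq)

/-- for non-conjugate unit vectors `z, y ∈ V_{n,m}` (`m ≥ 2`) with
`s(z)Ω_z = Ω_z` and `s(y)Ω_y = Ω_y`, one has `⟨Ω_z, S_J Ω_y⟩ = 0` for `1 ≤ |J| ≤ m−1`. -/
theorem subCuntz_stmt14 {H : Type*} [NormedAddCommGroup H] [InnerProductSpace ℂ H]
    [CompleteSpace H] {n m : ℕ} (hn : 2 ≤ n) (hm : 2 ≤ m)
    (S : Fin n → H →L[ℂ] H) (hS : IsCuntzFamily S)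
    (z y : Vnm n m) (hz : ‖z‖ = 1) (hy : ‖y‖ = 1)
    (hnc : ¬ ConjVec z y)
    (Ωz Ωy : H) (hΩz : ‖Ωz‖ = 1) (hΩy : ‖Ωy‖ = 1)
    (hfixz : sop S z Ωz = Ωz) (hfixy : sop S y Ωy = Ωy) :
    ∀ (k : ℕ), 1 ≤ k → k ≤ m - 1 → ∀ J : Fin k → Fin n,
      (inner ℂ Ωz (Sword S k J Ωy) : ℂ) = 0 :=
  subCuntz_stmt14_general S hS z y hz hy hnc Ωz Ωy hfixz hfixy
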